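/- Let U be a strongly continuous unitary representation of the additive group ℝ (time translations) on H with generator (Hamiltonian) whose spectrum is bounded below, and suppose E is a spectral measure on ℝ satisfying the covariance U(t) E(I) U(t)* = E(I + t) for all t ∈ ℝ and Borel I ⊆ ℝ. Then E = 0 or the spectrum of the generator is all of ℝ; in particular no such nonzero spectral measure exists if the generator is semibounded (Pauli's theorem). -/

import Mathlib

open MeasureTheory NormedSpace
open scoped InnerProductSpace

/-- A self-adjoint idempotent continuous linear map has operator norm at most 1. -/
lemma pauli_aux_norm_proj_le_one {H : Type*} [NormedAddCommGroup H]
    [InnerProductSpace ℂ H] [CompleteSpace H] (P : H →L[ℂ] H)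
    (h1 : IsIdempotentElem P) (h2 : IsSelfAdjoint P) : ‖P‖ ≤ 1 := by
  have hadj : ContinuousLinearMap.adjoint P = P :=
    ContinuousLinearMap.isSelfAdjoint_iff'.mp h2
  refine P.opNorm_le_bound zero_le_one (fun x => ?_)
  rw [one_mul]
  have hPP : P (P x) = P x := by
    rw [← ContinuousLinearMap.mul_apply, h1.eq]
  have h3 : ⟪P x, P x⟫_ℂ = ⟪x, P x⟫_ℂ := by
    calc ⟪P x, P x⟫_ℂ = ⟪x, P (P x)⟫_ℂ := by
          nth_rewrite 1 [← hadj]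
          exact ContinuousLinearMap.adjoint_inner_left P (P x) x
      _ = ⟪x, P x⟫_ℂ := by rw [hPP]
  have h4 : (‖P x‖ : ℝ) ^ 2 = RCLike.re ⟪x, P x⟫_ℂ := by
    rw [← h3, inner_self_eq_norm_sq]
  have h5 : RCLike.re ⟪x, P x⟫_ℂ ≤ ‖x‖ * ‖P x‖ := re_inner_le_norm x (P x)
  nlinarith [norm_nonneg (P x), norm_nonneg x]

set_option maxHeartbeats 1000000 in
/-- Pauli's theorem: Let U(t) = exp(-itH₀) be a strongly continuous
one-parameter unitary group on a (nontrivial) Hilbert space H whose generator H₀ is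
self-adjoint with spectrum bounded below, and suppose E is a normalized spectral
measure on ℝ satisfying the time-translation covariance U(t) E(I) U(t)* = E(I + t).
Then we reach a contradiction: a semibounded Hamiltonian admits no covariant time
observable described by a spectral measure. -/
theorem pauli_no_covariant_time_observable {H : Type*} [NormedAddCommGroup H]
    [InnerProductSpace ℂ H] [CompleteSpace H] [Nontrivial H]
    (H₀ : H →L[ℂ] H) (hH₀sa : IsSelfAdjoint H₀)
    (hbdd : BddBelow (spectrum ℝ H₀))
    (U : ℝ → H →L[ℂ] H)
    (hU : ∀ t : ℝ, U t = exp ((-(t : ℂ) * Complex.I) • H₀))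
    (E : Set ℝ → (H →L[ℂ] H))
    (hEproj : ∀ I : Set ℝ, MeasurableSet I →
      IsIdempotentElem (E I) ∧ IsSelfAdjoint (E I))
    (hEempty : E ∅ = 0) (hEuniv : E Set.univ = 1)
    (hEadd : ∀ f : ℕ → Set ℝ, (∀ n, MeasurableSet (f n)) →
      Pairwise (Function.onFun Disjoint f) → ∀ φ ψ : H,
        HasSum (fun n => ⟪φ, E (f n) ψ⟫_ℂ) ⟪φ, E (⋃ n, f n) ψ⟫_ℂ)
    (hEcov : ∀ (t : ℝ) (I : Set ℝ), MeasurableSet I →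
      U t ∘L E I ∘L ContinuousLinearMap.adjoint (U t) =
        E ((fun x => x + t) '' I)) :
    False := by
  classical
  -- Step 1: two-set additivity
  have hunion : ∀ I J : Set ℝ, MeasurableSet I → MeasurableSet J → Disjoint I J →
      E (I ∪ J) = E I + E J := by
    intro I J hI hJ hIJ
    set f : ℕ → Set ℝ := fun n => if n = 0 then I else if n = 1 then J else ∅ with hf
    have hmeas : ∀ n, MeasurableSet (f n) := by
      intro n; simp only [hf]
      split_ifs <;> first | exact hI | exact hJ | exact MeasurableSet.empty
    have hdisj : Pairwise (Function.onFun Disjoint f) := by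
      intro m n hmn
      simp only [Function.onFun, hf]
      rcases m with _ | _ | m <;> rcases n with _ | _ | n <;>
        simp_all [Set.disjoint_empty, Set.empty_disjoint, hIJ, hIJ.symm]
    have hUn : (⋃ n, f n) = I ∪ J := by
      apply Set.Subset.antisymm
      · refine Set.iUnion_subset (fun n => ?_)
        simp only [hf]
        split_ifs <;> simp [Set.subset_union_left, Set.subset_union_right]
      · rintro x (h | h)
        · exact Set.mem_iUnion.2 ⟨0, by simp [hf, h]⟩
        · exact Set.mem_iUnion.2 ⟨1, by simp [hf, h]⟩
    ext ψ
    apply ext_inner_left ℂ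
    intro φ
    have h1 := hEadd f hmeas hdisj φ ψ
    rw [hUn] at h1
    have ha : HasSum (fun n : ℕ => if n = 0 then ⟪φ, E I ψ⟫_ℂ else 0) ⟪φ, E I ψ⟫_ℂ :=
      hasSum_ite_eq 0 _
    have hb : HasSum (fun n : ℕ => if n = 1 then ⟪φ, E J ψ⟫_ℂ else 0) ⟪φ, E J ψ⟫_ℂ :=
      hasSum_ite_eq 1 _
    have hfun : (fun n : ℕ => ⟪φ, E (f n) ψ⟫_ℂ) =
        fun n : ℕ => (if n = 0 then ⟪φ, E I ψ⟫_ℂ else 0) +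
          (if n = 1 then ⟪φ, E J ψ⟫_ℂ else 0) := by
      funext n
      rcases n with _ | _ | n <;> simp [hf, hEempty]
    have h2 : HasSum (fun n : ℕ => ⟪φ, E (f n) ψ⟫_ℂ)
        (⟪φ, E I ψ⟫_ℂ + ⟪φ, E J ψ⟫_ℂ) := by
      rw [hfun]; exact ha.add hb
    rw [ContinuousLinearMap.add_apply, inner_add_right]
    exact h1.unique h2
  -- Step 2: choose small d with ‖U d - 1‖ < 1/4
  have hcont : Continuous (fun t : ℝ => exp ((-(t : ℂ) * Complex.I) • H₀)) := by
    let +nondep : NormedAlgebra ℚ (H →L[ℂ] H) := .restrictScalars ℚ ℂ (H →L[ℂ] H)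
    apply exp_continuous.comp
    fun_prop
  have h00 : exp ((-((0 : ℝ) : ℂ) * Complex.I) • H₀) = 1 := by
    simp [exp_zero]
  obtain ⟨δ, hδ0, hδ⟩ := Metric.continuousAt_iff.mp (hcont.continuousAt (x := 0))
    (1/4) (by norm_num)
  set d : ℝ := δ / 2 with hd_def
  have hd : 0 < d := by positivity
  have hUd : ‖U d - 1‖ < 1/4 := by
    have h := hδ (x := d) (by
      rw [Real.dist_eq, sub_zero, abs_of_pos hd]
      linarith)
    rw [dist_eq_norm, h00] at h
    rw [hU d]
    exact h
  set ε : ℝ := ‖U d - 1‖ with hε_def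
  have hε0 : 0 ≤ ε := norm_nonneg _
  -- Step 3: find an interval of length d with nonzero E
  obtain ⟨ψ, hψ⟩ := exists_ne (0 : H)
  set e : ℕ ≃ ℤ := (Denumerable.eqv ℤ).symm with he_def
  set fam : ℕ → Set ℝ :=
    fun n => Set.Ico (((e n : ℤ) : ℝ) * d) ((((e n : ℤ) : ℝ) + 1) * d) with hfam_def
  have hfmeas : ∀ n, MeasurableSet (fam n) := fun n => measurableSet_Ico
  have hfdisj : Pairwise (Function.onFun Disjoint fam) := by
    intro m n hmn
    have hk : e m ≠ e n := fun h => hmn (e.injective h)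
    simp only [Function.onFun, hfam_def]
    rw [Set.Ico_disjoint_Ico]
    rcases lt_or_gt_of_ne hk with h | h
    · have h1 : ((e m : ℤ) : ℝ) + 1 ≤ ((e n : ℤ) : ℝ) := by
        have := Int.add_one_le_iff.mpr h
        exact_mod_cast this
      refine min_le_of_left_le (le_trans ?_ (le_max_right _ _))
      exact mul_le_mul_of_nonneg_right h1 hd.le
    · have h1 : ((e n : ℤ) : ℝ) + 1 ≤ ((e m : ℤ) : ℝ) := by
        have := Int.add_one_le_iff.mpr h
        exact_mod_cast this
      refine min_le_of_right_le (le_trans ?_ (le_max_left _ _))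
      exact mul_le_mul_of_nonneg_right h1 hd.le
  have hfUn : (⋃ n, fam n) = Set.univ := by
    ext x
    simp only [Set.mem_iUnion, Set.mem_univ, iff_true]
    refine ⟨e.symm ⌊x / d⌋, ?_⟩
    simp only [hfam_def, Set.mem_Ico, Equiv.apply_symm_apply]
    constructor
    · calc ((⌊x / d⌋ : ℤ) : ℝ) * d ≤ (x / d) * d :=
            mul_le_mul_of_nonneg_right (Int.floor_le _) hd.le
        _ = x := div_mul_cancel₀ x hd.ne'
    · have h1 : x / d < (⌊x / d⌋ : ℝ) + 1 := Int.lt_floor_add_one _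
      calc x = (x / d) * d := (div_mul_cancel₀ x hd.ne').symm
        _ < ((⌊x / d⌋ : ℝ) + 1) * d := by
            exact mul_lt_mul_of_pos_right h1 hd
  have hadd := hEadd fam hfmeas hfdisj ψ ψ
  rw [hfUn, hEuniv] at hadd
  have hne : ∃ n, ⟪ψ, E (fam n) ψ⟫_ℂ ≠ 0 := by
    by_contra hcon
    push_neg at hcon
    have h2 : HasSum (fun n : ℕ => ⟪ψ, E (fam n) ψ⟫_ℂ) 0 := by
      have : (fun n : ℕ => ⟪ψ, E (fam n) ψ⟫_ℂ) = fun _ => (0 : ℂ) := funext hcon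
      rw [this]; exact hasSum_zero
    have h3 : ⟪ψ, (1 : H →L[ℂ] H) ψ⟫_ℂ = 0 := hadd.unique h2
    rw [ContinuousLinearMap.one_apply] at h3
    exact hψ (inner_self_eq_zero.mp h3)
  obtain ⟨n₀, hn₀⟩ := hne
  set a : ℝ := ((e n₀ : ℤ) : ℝ) * d with ha_def
  set b : ℝ := (((e n₀ : ℤ) : ℝ) + 1) * d with hb_def
  have hab : b = a + d := by rw [ha_def, hb_def]; ring
  set I : Set ℝ := Set.Ico a b with hI_def
  have hfamI : fam n₀ = I := rfl
  set J : Set ℝ := Set.Ico b (b + d) with hJ_def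
  set P : H →L[ℂ] H := E I with hP_def
  set Q : H →L[ℂ] H := E J with hQ_def
  have hImeas : MeasurableSet I := measurableSet_Ico
  have hJmeas : MeasurableSet J := measurableSet_Ico
  have himg : (fun x => x + d) '' I = J := by
    rw [hI_def, hJ_def, Set.image_add_const_Ico, hab]
  -- Step 4: orthogonality P * Q = Q * P = 0
  have hIJdisj : Disjoint I J := Set.Ico_disjoint_Ico_same
  have hEIJ : E (I ∪ J) = P + Q := hunion I J hImeas hJmeas hIJdisj
  obtain ⟨hPidem, hPsa⟩ := hEproj I hImeas
  obtain ⟨hQidem, hQsa⟩ := hEproj J hJmeas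
  obtain ⟨hPQidem, _⟩ := hEproj (I ∪ J) (hImeas.union hJmeas)
  rw [hEIJ] at hPQidem
  have hsum : (P + Q) * (P + Q) = P + Q := hPQidem
  have hanti : Q * P + P * Q = 0 := by
    have h : P + (Q * P + (P * Q + Q)) = P + Q := by
      calc P + (Q * P + (P * Q + Q)) = (P + Q) * (P + Q) := by
            rw [mul_add, add_mul, add_mul, hPidem.eq, hQidem.eq]; abel
        _ = P + Q := hsum
    have h2 : Q * P + (P * Q + Q) = Q := add_left_cancel h
    have h3 : (Q * P + P * Q) + Q = 0 + Q := by
      rw [zero_add, add_assoc]; exact h2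
    exact add_right_cancel h3
  have hQP : Q * P = 0 := by
    have e1 : P * (Q * P) + P * (P * Q) = 0 := by
      rw [← mul_add, hanti, mul_zero]
    have e2 : (Q * P) * P + (P * Q) * P = 0 := by
      rw [← add_mul, hanti, zero_mul]
    have e1' : P * Q * P + P * Q = 0 := by
      rw [← mul_assoc] at e1
      rw [show P * (P * Q) = P * Q by rw [← mul_assoc, hPidem.eq]] at e1
      linear_combination (norm := noncomm_ring) e1
    have e2' : Q * P + P * Q * P = 0 := by
      rw [mul_assoc] at e2
      rw [show Q * (P * P) = Q * P by rw [hPidem.eq]] at e2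
      linear_combination (norm := noncomm_ring) e2
    have hcomm : P * Q = Q * P := by
      have h3 : P * Q = -(P * Q * P) := by
        rw [← add_eq_zero_iff_eq_neg, add_comm]; exact e1'
      have h4 : Q * P = -(P * Q * P) := by
        rw [← add_eq_zero_iff_eq_neg]; exact e2'
      rw [h3, h4]
    have h4 : (2 : ℂ) • (Q * P) = 0 := by
      rw [two_smul]
      calc Q * P + Q * P = Q * P + P * Q := by rw [hcomm]
        _ = 0 := hanti
    rcases smul_eq_zero.mp h4 with h5 | h5
    · exact absurd h5 two_ne_zero
    · exact h5
  -- Step 5: the vector x = P ψ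
  set x : H := P ψ with hx_def
  have hx0 : x ≠ 0 := by
    intro h
    apply hn₀
    rw [h, inner_zero_right]
  have hQx : Q x = 0 := by
    rw [hx_def, ← ContinuousLinearMap.mul_apply, hQP, ContinuousLinearMap.zero_apply]
  have hPx : P x = x := by
    rw [hx_def, ← ContinuousLinearMap.mul_apply, hPidem.eq]
  -- Step 6: norm estimates
  set A : H →L[ℂ] H := ContinuousLinearMap.adjoint (U d) with hA_def
  have hcov := hEcov d I hImeas
  rw [himg] at hcov
  have hcov' : U d * P * A = Q := hcov
  have hdecomp : Q - P = (U d - 1) * (P * A) + P * (A - 1) := by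
    have hexp : (U d - 1) * (P * A) + P * (A - 1) = U d * P * A - P := by
      noncomm_ring
    rw [hexp, hcov']
  have hA1 : ‖A - 1‖ = ε := by
    have hadj1 : ContinuousLinearMap.adjoint (1 : H →L[ℂ] H) = 1 := by
      rw [← ContinuousLinearMap.star_eq_adjoint]; exact star_one _
    have : A - 1 = ContinuousLinearMap.adjoint (U d - 1) := by
      rw [map_sub, hadj1, hA_def]
    rw [this, hε_def]
    exact LinearIsometryEquiv.norm_map ContinuousLinearMap.adjoint _
  have hAn : ‖A‖ ≤ 1 + ε := by
    have h1 : ‖A‖ = ‖U d‖ := LinearIsometryEquiv.norm_map ContinuousLinearMap.adjoint _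
    have h2 : ‖U d‖ ≤ ‖U d - 1‖ + ‖(1 : H →L[ℂ] H)‖ := by
      calc ‖U d‖ = ‖(U d - 1) + 1‖ := by rw [sub_add_cancel]
        _ ≤ ‖U d - 1‖ + ‖(1 : H →L[ℂ] H)‖ := norm_add_le _ _
    have h3 : ‖(1 : H →L[ℂ] H)‖ ≤ 1 := by
      rw [ContinuousLinearMap.one_def]
      exact ContinuousLinearMap.norm_id_le
    rw [h1]
    calc ‖U d‖ ≤ ε + ‖(1 : H →L[ℂ] H)‖ := h2
      _ ≤ ε + 1 := by linarith
      _ = 1 + ε := by ring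
  have hP1 : ‖P‖ ≤ 1 := pauli_aux_norm_proj_le_one P hPidem hPsa
  have hQmP : ‖Q - P‖ < 1 := by
    have hb1 : ‖Q - P‖ ≤ ‖(U d - 1) * (P * A)‖ + ‖P * (A - 1)‖ := by
      rw [hdecomp]; exact norm_add_le _ _
    have hb2 : ‖(U d - 1) * (P * A)‖ ≤ ε * (1 * (1 + ε)) := by
      calc ‖(U d - 1) * (P * A)‖ ≤ ‖U d - 1‖ * ‖P * A‖ := norm_mul_le _ _
        _ ≤ ε * (1 * (1 + ε)) := by
            refine mul_le_mul le_rfl ?_ (norm_nonneg _) hε0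
            calc ‖P * A‖ ≤ ‖P‖ * ‖A‖ := norm_mul_le _ _
              _ ≤ 1 * (1 + ε) := mul_le_mul hP1 hAn (norm_nonneg _) zero_le_one
    have hb3 : ‖P * (A - 1)‖ ≤ 1 * ε := by
      calc ‖P * (A - 1)‖ ≤ ‖P‖ * ‖A - 1‖ := norm_mul_le _ _
        _ ≤ 1 * ε := by rw [hA1]; exact mul_le_mul_of_nonneg_right hP1 hε0
    have hε14 : ε < 1/4 := hUd
    nlinarith
  -- Step 7: contradiction
  have hlow : ‖x‖ ≤ ‖Q - P‖ * ‖x‖ := by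
    have hQPx : (Q - P) x = -x := by
      rw [ContinuousLinearMap.sub_apply, hQx, hPx, zero_sub]
    calc ‖x‖ = ‖(Q - P) x‖ := by rw [hQPx, norm_neg]
      _ ≤ ‖Q - P‖ * ‖x‖ := (Q - P).le_opNorm x
  have hxpos : 0 < ‖x‖ := norm_pos_iff.mpr hx0
  nlinarith
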